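/- arXiv:1909.07266 — 3 statements merged into one kernel-verified Lean document; each statement's English description precedes it below -/
import Mathlib

section
/- Let x₁,…,x_m and y₁,…,y_n be points of a metric space (X,d) with m ≤ n, let C > 0 and p ≥ 1. Extend x by setting x_i = ℵ for m < i ≤ n, using the extended metric d' on X ∪ {ℵ} with d'(x,y) = min{d(x,y), 2^(1/p)C} on X, d'(x,ℵ) = C, d'(ℵ,ℵ) = 0. Then the transport–transform quantity τ(ξ,η)^p, defined as the minimum over all l ∈ {0,…,m} and all choices of pairwise distinct indices i₁,…,i_l ∈ [m] and pairwise distinct j₁,…,j_l ∈ [n] of (m+n−2l)·C^p + Σ_{r=1}^l d(x_{i_r}, y_{j_r})^p, equals min over permutations π of {1,…,n} of Σ_{i=1}^n d'(x_i, y_{π(i)})^p. -/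
/-!
Pad `x` with `n - m` copies of `ℵ`. Each `ℵ` costs `C ^ p`, and a real pair `(x_i, y_{π i})`
costs `min (d ^ p) (2 * C ^ p)`: it is either matched, or both points stay unmatched at penalty
`C ^ p` each. Hence the cost of `π` is the cost of the partial matching that keeps the pairs with
`d ^ p ≤ 2 * C ^ p`, and conversely a partial matching extends to a permutation whose cost is at
most its own.
-/

/-- Extended distance on `X ∪ {ℵ}` (modeled as `Option X`). -/
noncomputable def dExt {X : Type*} [MetricSpace X] (C p : ℝ) : Option X → Option X → ℝ
  | some a, some b => min (dist a b) ((2 : ℝ) ^ (1 / p) * C)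
  | some _, none => C
  | none, some _ => C
  | none, none => 0

open Finset

theorem Equiv.Perm.exists_comp_eq_of_injective {α β : Type*} [Finite β] {f g : α → β}
    (hf : Function.Injective f) (hg : Function.Injective g) : ∃ π : Equiv.Perm β, π ∘ f = g := by
  classical
  let e : Set.range f ≃ Set.range g := (Equiv.ofInjective f hf).symm.trans (Equiv.ofInjective g hg)
  refine ⟨e.extendSubtype, funext fun a => ?_⟩
  simp [e, Equiv.extendSubtype_apply_of_mem e (f a) ⟨a, rfl⟩, Equiv.ofInjective_symm_apply]

theorem Real.min_rpow {x y p : ℝ} (hx : 0 ≤ x) (hy : 0 ≤ y) (hp : 0 ≤ p) :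
    min x y ^ p = min (x ^ p) (y ^ p) := by
  rcases le_total x y with h | h
  · rw [min_eq_left h, min_eq_left (Real.rpow_le_rpow hx h hp)]
  · rw [min_eq_right h, min_eq_right (Real.rpow_le_rpow hy h hp)]

theorem sum_dExt_pad_rpow {X : Type*} [MetricSpace X] {C p : ℝ} (hC : 0 ≤ C) (hp : 0 < p)
    {m k : ℕ} (x : Fin m → X) (z : Fin (m + k) → X) :
    ∑ i : Fin (m + k), dExt C p (if h : (i : ℕ) < m then some (x ⟨i, h⟩) else none) (some (z i)) ^ p
      = ∑ i : Fin m, min (dist (x i) (z (Fin.castAdd k i)) ^ p) (2 * C ^ p) + k * C ^ p := by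
  have hcap : ((2 : ℝ) ^ (1 / p) * C) ^ p = 2 * C ^ p := by
    rw [Real.mul_rpow (by positivity) hC, ← Real.rpow_mul zero_le_two, one_div_mul_cancel hp.ne',
      Real.rpow_one]
  rw [Fin.sum_univ_add]
  congr 1
  · refine sum_congr rfl fun i _ => ?_
    have hi : ((Fin.castAdd k i : Fin (m + k)) : ℕ) < m := i.isLt
    rw [dif_pos hi, dExt, Real.min_rpow dist_nonneg (by positivity) hp.le, hcap]
    rfl
  · simp [dExt]

section PartialMatching

variable {α : Type*} [Fintype α] (c : α → ℝ) (b : ℝ)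

theorem sum_min_le_sum_comp_add {l : ℕ} {i : Fin l → α} (hi : Function.Injective i) :
    ∑ a, min (c a) b ≤ ∑ r, c (i r) + ((Fintype.card α : ℝ) - l) * b := by
  classical
  calc ∑ a, min (c a) b
      = ∑ a ∈ univ.image i, min (c a) b + ∑ a ∈ (univ.image i)ᶜ, min (c a) b :=
        (sum_add_sum_compl _ _).symm
    _ ≤ ∑ a ∈ univ.image i, c a + ∑ a ∈ (univ.image i)ᶜ, b :=
        add_le_add (sum_le_sum fun _ _ => min_le_left _ _) (sum_le_sum fun _ _ => min_le_right _ _)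
    _ = ∑ r, c (i r) + ((Fintype.card α : ℝ) - l) * b := by
        rw [sum_image hi.injOn, sum_const, card_compl, card_image_of_injective _ hi, card_univ,
          nsmul_eq_mul, Nat.cast_sub (Fintype.card_le_of_injective i hi)]
        simp

theorem exists_injective_sum_min_eq :
    ∃ (l : ℕ) (i : Fin l → α), Function.Injective i ∧
      ∑ a, min (c a) b = ∑ r, c (i r) + ((Fintype.card α : ℝ) - l) * b := by
  classical
  set M := univ.filter fun a => c a ≤ b
  refine ⟨#M, fun r => M.equivFin.symm r, Subtype.val_injective.comp M.equivFin.symm.injective, ?_⟩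
  have hcard : #(univ.filter fun a => ¬c a ≤ b) = Fintype.card α - #M := by
    rw [filter_not, ← compl_eq_univ_sdiff, card_compl]
  simp only [min_def, sum_ite, sum_const, hcard, nsmul_eq_mul,
    Nat.cast_sub (card_le_univ M)]
  rw [← sum_coe_sort M c, ← Equiv.sum_comp M.equivFin.symm]

end PartialMatching

/-- The TT-distance (to the `p`) as a partial-matching minimum equals the optimal
assignment cost in the extended space, after filling the smaller pattern with `ℵ`. -/
theorem stmt2 {X : Type*} [MetricSpace X] (C p : ℝ) (hC : 0 < C) (hp : 1 ≤ p)
    (m n : ℕ) (hmn : m ≤ n) (x : Fin m → X) (y : Fin n → X) :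
    sInf { c : ℝ | ∃ (l : ℕ) (_ : l ≤ min m n) (i : Fin l → Fin m) (j : Fin l → Fin n),
        Function.Injective i ∧ Function.Injective j ∧
        c = ((m : ℝ) + n - 2 * l) * C ^ p + ∑ r, dist (x (i r)) (y (j r)) ^ p } =
    sInf { c : ℝ | ∃ π : Equiv.Perm (Fin n),
        c = ∑ i : Fin n,
          dExt C p (if h : (i : ℕ) < m then some (x ⟨i, h⟩) else none) (some (y (π i))) ^ p } := by
  obtain ⟨k, rfl⟩ := Nat.exists_eq_add_of_le hmn
  have hp₀ : 0 < p := one_pos.trans_le hp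
  let cost (π : Equiv.Perm (Fin (m + k))) (a : Fin m) := dist (x a) (y (π (Fin.castAdd k a))) ^ p
  apply csInf_eq_csInf_of_forall_exists_le
  · rintro _ ⟨l, -, i, j, hi, hj, rfl⟩
    obtain ⟨π, hπ⟩ := Equiv.Perm.exists_comp_eq_of_injective ((Fin.castAdd_injective m k).comp hi) hj
    refine ⟨_, ⟨π, rfl⟩, ?_⟩
    have hπ' : ∀ r, π (Fin.castAdd k (i r)) = j r := congrFun hπ
    have hle := sum_min_le_sum_comp_add (cost π) (2 * C ^ p) hi
    simp only [cost, hπ', Fintype.card_fin] at hle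
    rw [sum_dExt_pad_rpow hC.le hp₀ x (fun i => y (π i))]
    push_cast
    linarith
  · rintro _ ⟨π, rfl⟩
    obtain ⟨l, i, hi, heq⟩ := exists_injective_sum_min_eq (cost π) (2 * C ^ p)
    have hlm : l ≤ m := by simpa using Fintype.card_le_of_injective i hi
    refine ⟨_, ⟨l, le_min hlm (hlm.trans hmn), i, fun r => π (Fin.castAdd k (i r)), hi,
      (π.injective.comp (Fin.castAdd_injective m k)).comp hi, rfl⟩, le_of_eq ?_⟩
    rw [sum_dExt_pad_rpow hC.le hp₀ x (fun i => y (π i))]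
    simp only [cost, Fintype.card_fin] at heq
    rw [heq]
    push_cast
    ring
end

section
/- Let ξ = Σ_{i=1}^n δ_{xᵢ} and η = Σ_{j=1}^n δ_{yⱼ} be point patterns of equal cardinality n in a metric space (X,d), and let ℵ be an auxiliary point. If both patterns are extended to cardinality N > n by adding N−n points at ℵ each, then min_{π∈S_N} Σ_{i=1}^N d'(xᵢ, y_{π(i)})^p = min_{π∈S_n} Σ_{i=1}^n d'(xᵢ, y_{π(i)})^p, where d' is the extended metric with d'(ℵ,ℵ)=0, d'(x,ℵ)=C, and d'(x,y)=min{d(x,y),2^(1/p)C} for x,y ∈ X. In particular, the TT-distance is unchanged by adding equal numbers of ℵ-points to both patterns. -/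
/-!
Number the points of both extended patterns by `ℕ`, the `ℵ`-points being those of index `≥ n`.
Because `d'` is truncated at `2^(1/p) C`, the cost `d'^p` satisfies the triangle inequality
`d'(a, b)^p ≤ d'(a, ℵ)^p + d'(ℵ, b)^p` through `ℵ`. So if in a matching some `a` goes to `ℵ`
and `ℵ` goes to some `b`, matching `a` with `b` and `ℵ` with itself does not increase the cost.
Hence an optimal matching of `N + 1` points may be assumed to fix the last `ℵ`-point, which can
then be dropped at no cost; induction on `N` finishes the proof.
-/

open Equiv

theorem Equiv.Perm.exists_apply_eq_self_sum_le {α : Type*} [Fintype α] [DecidableEq α]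
    (c : α → α → ℝ) {z : α} (hz : c z z = 0)
    (htri : ∀ a b, c a b ≤ c a z + c z b) (π : Perm α) :
    ∃ π' : Perm α, π' z = z ∧ ∑ i, c i (π' i) ≤ ∑ i, c i (π i) := by
  set a := π.symm z
  have hπa : π a = z := π.apply_symm_apply z
  by_cases haz : a = z
  · exact ⟨π, haz ▸ hπa, le_rfl⟩
  refine ⟨swap z (π z) * π, by simp, ?_⟩
  -- only the rows `a` and `z` change: `a ↦ z, z ↦ π z` becomes `a ↦ π z, z ↦ z`
  have hdiff : ∑ i, (c i ((swap z (π z) * π) i) - c i (π i)) =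
      (c a (π z) - c a z) + (c z z - c z (π z)) := by
    rw [Finset.sum_eq_add a z haz (fun i _ ⟨hia, hiz⟩ => ?_) (by simp) (by simp)]
    · simp [hπa]
    · have hπi : π i ≠ z := fun h => hia (π.injective (h.trans hπa.symm))
      have hπi' : π i ≠ π z := fun h => hiz (π.injective h)
      simp [swap_apply_of_ne_of_ne hπi hπi']
  rw [Finset.sum_sub_distrib] at hdiff
  linarith [htri a (π z)]

namespace Equiv.Perm

variable {m : ℕ}

theorem exists_castSucc_extension (σ : Perm (Fin m)) :
    ∃ π : Perm (Fin (m + 1)), π (Fin.last m) = Fin.last m ∧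
      ∀ i, π i.castSucc = (σ i).castSucc := by
  refine ⟨σ.extendDomain (finSuccAboveEquiv (Fin.last m)),
    extendDomain_apply_not_subtype _ _ (by simp), fun i => ?_⟩
  have := extendDomain_apply_image σ (finSuccAboveEquiv (Fin.last m)) i
  simpa [finSuccAboveEquiv_apply] using this

theorem exists_castSucc_restriction {π : Perm (Fin (m + 1))} (hπ : π (Fin.last m) = Fin.last m) :
    ∃ σ : Perm (Fin m), ∀ i, π i.castSucc = (σ i).castSucc := by
  have hne : ∀ i, π i ≠ Fin.last m ↔ i ≠ Fin.last m := fun i => (π.injective.ne_iff' hπ)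
  refine ⟨(finSuccAboveEquiv (Fin.last m)).symm.permCongr (π.subtypePerm hne), fun i => ?_⟩
  simp [finSuccAboveEquiv_apply, finSuccAboveEquiv_symm_apply_last]

end Equiv.Perm

section Assignment

def assignmentCost (c : ℕ → ℕ → ℝ) {m : ℕ} (π : Perm (Fin m)) : ℝ :=
  ∑ i : Fin m, c i (π i)

variable (c : ℕ → ℕ → ℝ) {m : ℕ}

theorem assignmentCost_eq_add_of_castSucc {π : Perm (Fin (m + 1))} {σ : Perm (Fin m)}
    (hπ : π (Fin.last m) = Fin.last m) (hπσ : ∀ i, π i.castSucc = (σ i).castSucc) :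
    assignmentCost c π = assignmentCost c σ + c m m := by
  simp [assignmentCost, Fin.sum_univ_castSucc, hπ, hπσ]

theorem iInf_assignmentCost_succ (hm : c m m = 0) (htri : ∀ a b, c a b ≤ c a m + c m b) :
    ⨅ π : Perm (Fin (m + 1)), assignmentCost c π = ⨅ σ : Perm (Fin m), assignmentCost c σ := by
  apply le_antisymm
  · refine le_ciInf fun σ => ?_
    obtain ⟨π, hπ, hπσ⟩ := σ.exists_castSucc_extension
    refine ciInf_le_of_le (Set.finite_range _).bddBelow π ?_
    rw [assignmentCost_eq_add_of_castSucc c hπ hπσ, hm, add_zero]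
  · refine le_ciInf fun π => ?_
    obtain ⟨π', hπ', hle⟩ := Perm.exists_apply_eq_self_sum_le (fun i j : Fin (m + 1) => c i j)
      (z := Fin.last m) (by simpa using hm) (fun a b => by simpa using htri a b) π
    obtain ⟨σ, hπσ⟩ := Perm.exists_castSucc_restriction hπ'
    refine ciInf_le_of_le (Set.finite_range _).bddBelow σ ?_
    rw [← add_zero (assignmentCost c σ), ← hm, ← assignmentCost_eq_add_of_castSucc c hπ' hπσ]
    exact hle

end Assignment

/-- The pattern `x` followed by infinitely many copies of `ℵ`, encoded as `none`. -/
def padWithNone {X : Type*} {n : ℕ} (x : Fin n → X) (a : ℕ) : Option X :=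
  if h : a < n then some (x ⟨a, h⟩) else none

theorem padWithNone_of_le {X : Type*} {n : ℕ} (x : Fin n → X) {a : ℕ} (h : n ≤ a) :
    padWithNone x a = none :=
  dif_neg h.not_gt

theorem dExt_rpow_le_add {X : Type*} [MetricSpace X] {C p : ℝ} (hC : 0 ≤ C) (hp : 0 < p)
    (a b : Option X) : dExt C p a b ^ p ≤ dExt C p a none ^ p + dExt C p none b ^ p := by
  rcases a with _ | a <;> rcases b with _ | b
  case some.some =>
    have h2 : (0 : ℝ) ≤ 2 ^ (1 / p) := by positivity
    calc dExt C p (some a) (some b) ^ p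
        ≤ (2 ^ (1 / p) * C) ^ p :=
          Real.rpow_le_rpow (le_min dist_nonneg (by positivity)) (min_le_right _ _) hp.le
      _ = C ^ p + C ^ p := by
          rw [Real.mul_rpow h2 hC, ← Real.rpow_mul zero_le_two, one_div_mul_cancel hp.ne',
            Real.rpow_one, two_mul]
      _ = _ := by simp [dExt]
  all_goals simp [dExt, Real.zero_rpow hp.ne']

/-- The optimal assignment cost between two patterns of equal cardinality `n` is unchanged
when both patterns are extended to cardinality `N > n` by adding points at `ℵ`. -/
theorem stmt7 {X : Type*} [MetricSpace X] (C p : ℝ) (hC : 0 < C) (hp : 1 ≤ p)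
    (n N : ℕ) (hnN : n < N) (x y : Fin n → X) :
    sInf { c : ℝ | ∃ π : Equiv.Perm (Fin N),
        c = ∑ i : Fin N,
          dExt C p (if h : (i : ℕ) < n then some (x ⟨i, h⟩) else none)
            (if h : ((π i : Fin N) : ℕ) < n then some (y ⟨π i, h⟩) else none) ^ p } =
    sInf { c : ℝ | ∃ π : Equiv.Perm (Fin n),
        c = ∑ i : Fin n, dExt C p (some (x i)) (some (y (π i))) ^ p } := by
  have hp0 : 0 < p := by linarith
  set cost : ℕ → ℕ → ℝ := fun a b => dExt C p (padWithNone x a) (padWithNone y b) ^ p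
  have hstable : ∀ m, n ≤ m →
      ⨅ π : Perm (Fin m), assignmentCost cost π = ⨅ σ : Perm (Fin n), assignmentCost cost σ := by
    intro m hm
    induction m, hm using Nat.le_induction with
    | base => rfl
    | succ m hm ih =>
      have hnone : ∀ z : Fin n → X, padWithNone z m = none := (padWithNone_of_le · hm)
      rw [iInf_assignmentCost_succ cost (by simp [cost, hnone, dExt, Real.zero_rpow hp0.ne'])
        (fun a b => by simpa [cost, hnone] using dExt_rpow_le_add hC.le hp0 _ _), ih]
  convert hstable N hnN.le using 1 <;> congr 1 <;> ext c <;> refine exists_congr fun π => ?_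
  · exact eq_comm
  · simp [eq_comm, assignmentCost, cost, padWithNone]
end

section
/- Let ξⱼ = Σ_{i=1}^{n} δ_{x_{ij}} (j = 1,…,k) be point patterns of common cardinality n in the extended metric space (X', d') (where points may equal ℵ). Then min over finite point patterns ζ of Σ_{j=1}^k τ(ξⱼ|_X, ζ)^p, restricted to candidates ζ = Σ_{i=1}^n δ_{zᵢ} with zᵢ ∈ X', equals min over permutations π₁,…,π_k ∈ S_n of Σ_{i=1}^n min_{z ∈ X'} Σ_{j=1}^k d'(x_{πⱼ(i),j}, z)^p. In other words, the multi-pattern Fréchet minimization interchanges: min over centers and matchings of the doubly-indexed sum equals the nested minimization where each cluster {x_{πⱼ(i),j} : j} is assigned an optimal center independently. -/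
/-!
Both sides are the infimum, over centres `z` and matchings `π`, of the double sum
`∑ j, ∑ i, d'(x j (π j i), z i) ^ p`. Indeed, a finite sum of infima over independent
variables is the infimum of the sum over the product of the index types, and two iterated
infima of a function bounded below commute.
-/

open Finset

lemma dExt_nonneg {X : Type*} [MetricSpace X] {C : ℝ} (p : ℝ) (hC : 0 ≤ C) (a b : Option X) :
    0 ≤ dExt C p a b := by
  rcases a with _ | a <;> rcases b with _ | b <;> simp only [dExt, le_refl, hC]
  exact le_min dist_nonneg (by positivity)

lemma sInf_setOf_exists_eq {α γ : Type*} [InfSet γ] (f : α → γ) :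
    sInf {c | ∃ a, c = f a} = ⨅ a, f a :=
  congrArg sInf <| Set.ext fun _ => exists_congr fun _ => eq_comm

lemma ciInf_comm {α β γ : Type*} [ConditionallyCompleteLattice γ] {f : α → β → γ}
    (hf : BddBelow (Set.range (Function.uncurry f))) :
    ⨅ a, ⨅ b, f a b = ⨅ b, ⨅ a, f a b := by
  have hf' : BddBelow (Set.range (Function.uncurry f ∘ Prod.swap)) := by
    rwa [Set.range_comp, Set.range_eq_univ.2 Prod.swap_surjective, Set.image_univ]
  have h := ciInf_prod hf
  have h' := ciInf_prod hf'
  simp only [Function.comp_apply, Prod.swap_prod_mk, Function.uncurry_apply_pair] at h h'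
  rw [← h, ← h', ← (Equiv.prodComm β α).iInf_comp]
  rfl

theorem Real.sum_iInf_eq_iInf_sum {ι : Type*} [Fintype ι] {α : ι → Type*}
    [∀ i, Nonempty (α i)] {f : ∀ i, α i → ℝ} (hf : ∀ i, BddBelow (Set.range (f i))) :
    ∑ i, ⨅ a, f i a = ⨅ a : ∀ i, α i, ∑ i, f i (a i) := by
  refine le_antisymm (le_ciInf fun a => sum_le_sum fun i _ => ciInf_le (hf i) (a i)) ?_
  choose m hm using hf
  have hbdd : BddBelow (Set.range fun a : ∀ i, α i => ∑ i, f i (a i)) :=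
    ⟨∑ i, m i, Set.forall_mem_range.2 fun a : ∀ i, α i =>
      sum_le_sum fun i _ => hm i ⟨a i, rfl⟩⟩
  refine le_of_forall_pos_le_add fun ε hε => ?_
  set δ := ε / (Fintype.card ι + 1)
  have hδ : 0 < δ := by positivity
  have hcard : Fintype.card ι * δ ≤ ε := by
    rw [mul_div_assoc', div_le_iff₀ (by positivity)]
    linarith
  choose a ha using fun i => exists_lt_of_ciInf_lt (lt_add_of_pos_right (⨅ b, f i b) hδ)
  calc ⨅ a : ∀ i, α i, ∑ i, f i (a i) ≤ ∑ i, f i (a i) := ciInf_le hbdd a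
    _ ≤ ∑ i, ((⨅ b, f i b) + δ) := sum_le_sum fun i _ => (ha i).le
    _ = (∑ i, ⨅ b, f i b) + Fintype.card ι * δ := by
      rw [sum_add_distrib, sum_const, card_univ, nsmul_eq_mul]
    _ ≤ (∑ i, ⨅ b, f i b) + ε := by linarith

theorem stmt12_general {X : Type*} [MetricSpace X] (C p : ℝ) (hC : 0 < C)
    (k n : ℕ) (x : Fin k → Fin n → Option X) :
    sInf { c : ℝ | ∃ z : Fin n → Option X,
      c = ∑ j : Fin k, sInf { s : ℝ | ∃ π : Equiv.Perm (Fin n),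
            s = ∑ i : Fin n, dExt C p (x j (π i)) (z i) ^ p } } =
    sInf { c : ℝ | ∃ π : Fin k → Equiv.Perm (Fin n),
      c = ∑ i : Fin n, sInf { s : ℝ | ∃ z : Option X,
            s = ∑ j : Fin k, dExt C p (x j ((π j) i)) z ^ p } } := by
  have hcost (a b : Option X) : 0 ≤ dExt C p a b ^ p :=
    Real.rpow_nonneg (dExt_nonneg p hC.le a b) p
  simp only [sInf_setOf_exists_eq]
  have hL (z : Fin n → Option X) := Real.sum_iInf_eq_iInf_sum (ι := Fin k)
    (f := fun j (π : Equiv.Perm (Fin n)) => ∑ i, dExt C p (x j (π i)) (z i) ^ p)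
    fun _ => ⟨0, Set.forall_mem_range.2 fun _ => sum_nonneg fun _ _ => hcost _ _⟩
  have hR (π : Fin k → Equiv.Perm (Fin n)) := Real.sum_iInf_eq_iInf_sum (ι := Fin n)
    (f := fun i (z : Option X) => ∑ j, dExt C p (x j (π j i)) z ^ p)
    fun _ => ⟨0, Set.forall_mem_range.2 fun _ => sum_nonneg fun _ _ => hcost _ _⟩
  simp only [hL, hR]
  rw [ciInf_comm ⟨0, Set.forall_mem_range.2 fun _ =>
    sum_nonneg fun _ _ => sum_nonneg fun _ _ => hcost _ _⟩]
  exact iInf_congr fun π => iInf_congr fun z => sum_comm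

/-- Interchange of minimization for the multi-pattern Fréchet functional: minimizing over
centers `z₁,…,z_n ∈ X'` the sum over `j` of the optimal assignment costs to `ξⱼ` equals
minimizing over matchings `π₁,…,π_k` the sum over clusters of the optimal cluster-center
cost. Here `x j i` is the `i`-th point of the `j`-th pattern (possibly `ℵ = none`). -/
theorem stmt12 {X : Type*} [MetricSpace X] (C p : ℝ) (hC : 0 < C) (hp : 1 ≤ p)
    (k n : ℕ) (x : Fin k → Fin n → Option X) :
    sInf { c : ℝ | ∃ z : Fin n → Option X,
      c = ∑ j : Fin k, sInf { s : ℝ | ∃ π : Equiv.Perm (Fin n),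
            s = ∑ i : Fin n, dExt C p (x j (π i)) (z i) ^ p } } =
    sInf { c : ℝ | ∃ π : Fin k → Equiv.Perm (Fin n),
      c = ∑ i : Fin n, sInf { s : ℝ | ∃ z : Option X,
            s = ∑ j : Fin k, dExt C p (x j ((π j) i)) z ^ p } } :=
  stmt12_general C p hC k n x
end
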